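/- (Correctness of the mechanism in world H.) Assume 0 < P_{ℓH} and P_{ℓL} < 1, and let c = (1/3)·min{T_{ℓh} − P_{ℓH}, T_{ℓℓ} − T_{ℓh}, P_{ℓL} − T_{ℓℓ}, P_{hH} − T_{hh}, T_{hh} − T_{hℓ}, T_{hℓ} − P_{hL}} (which is positive). Let T be an odd positive integer and F, U, K natural numbers with F + U + K = T, 2F < T and 2U < T. Set a_ℓ = (F + K·T_{hℓ})/T and a_h = (F + K·T_{hh})/T. For each k ∈ {0, 1, …, K} let frac(k) = (F + k)/T and let med(k) be the ((T+1)/2)-th smallest element of the multiset consisting of F copies of 0, (K − k) copies of a_ℓ, k copies of a_h, and U copies of 1. Then the probability, for k drawn from the binomial distribution Binomial(K, P_{hH}), that frac(k) ≤ med(k) is at most 2·exp(−2c²K). -/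

import Mathlib

/-!
The median prediction is at most `a_h`: the `F` zeros and the `K` contingent predictions, all
at most `a_h`, make up more than half of the `T` predictions. So `R` can only be output when
`k ≤ K·T_{hh} ≤ K·(P_{hH} - 3c)`, a lower-tail event of `Binomial(K, P_{hH})` at distance `3c`.
The Chernoff bound with the crude estimate `1 - p + p e^{-λ} ≤ e^{-pλ + λ²}` at `λ = 3c/2` bounds
its probability by `exp(-9c²K/4)`. That `c ≥ 0` holds because each `T_{m'm}` is a posterior
average of `P_{m'L}` and `P_{m'H}`, whose weight moves towards `L` after the signal `ℓ`.
-/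

open scoped ENNReal

/-- Posterior prediction `T_{m'm}` of the fraction of agents receiving signal `m'`,
for an agent who received signal `m`. -/
noncomputable def Tpost (PL PH PmL PmH Pm'L Pm'H : ℝ) : ℝ :=
  (PL * PmL * Pm'L + PH * PmH * Pm'H) / (PL * PmL + PH * PmH)

/-- The constant `c` of equation (3). -/
noncomputable def cconst (PL PH PlL PhL PlH PhH : ℝ) : ℝ :=
  (1 / 3) * min (min (min (Tpost PL PH PhL PhH PlL PlH - PlH)
      (Tpost PL PH PlL PlH PlL PlH - Tpost PL PH PhL PhH PlL PlH))
    (min (PlL - Tpost PL PH PlL PlH PlL PlH)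
      (PhH - Tpost PL PH PhL PhH PhL PhH)))
    (min (Tpost PL PH PhL PhH PhL PhH - Tpost PL PH PlL PlH PhL PhH)
      (Tpost PL PH PlL PlH PhL PhH - PhL))

/-- `med F U K T al ah k` : the `((T+1)/2)`-th smallest element of the multiset consisting of
`F` copies of `0`, `K - k` copies of `al`, `k` copies of `ah` and `U` copies of `1`. -/
noncomputable def medOf (F U K T : ℕ) (al ah : ℝ) (k : ℕ) : ℝ :=
  ((Multiset.replicate F (0 : ℝ) + Multiset.replicate (K - k) al +
      Multiset.replicate k ah + Multiset.replicate U (1 : ℝ)).sort (· ≤ ·)).getD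
    ((T + 1) / 2 - 1) 0

theorem List.getD_le_of_lt_length_filter {α : Type*} [LinearOrder α] {x d : α} :
    ∀ {l : List α} {i : ℕ}, l.Pairwise (· ≤ ·) → i < (l.filter (· ≤ x)).length →
      l.getD i d ≤ x
  | [], _, _, hi => by simp at hi
  | a :: l, 0, hl, hi => by
    by_contra! hxa
    have : (a :: l).filter (· ≤ x) = [] := by
      refine List.filter_eq_nil_iff.mpr fun y hy => ?_
      have hay : a ≤ y := by
        rcases List.mem_cons.mp hy with rfl | hy
        · exact le_rfl
        · exact List.rel_of_pairwise_cons hl hy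
      simpa using hxa.trans_le hay
    simp [this] at hi
  | a :: l, i + 1, hl, hi => by
    rw [List.getD_cons_succ]
    refine List.getD_le_of_lt_length_filter (List.pairwise_cons.mp hl).2 ?_
    rw [List.filter_cons] at hi
    split_ifs at hi
    · simpa using hi
    · omega

theorem Multiset.sort_getD_le_of_lt_card_filter {α : Type*} [LinearOrder α] (s : Multiset α)
    {x d : α} {i : ℕ} (hi : i < card (s.filter (· ≤ x))) : (s.sort (· ≤ ·)).getD i d ≤ x := by
  rw [← s.sort_eq (· ≤ ·), Multiset.filter_coe, Multiset.coe_card] at hi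
  exact List.getD_le_of_lt_length_filter (s.pairwise_sort _) hi

theorem medOf_le (F U K T : ℕ) (al ah : ℝ) (k : ℕ) (hah : 0 ≤ ah) (hal : al ≤ ah) (hk : k ≤ K)
    (hT : T < 2 * (F + K)) : medOf F U K T al ah k ≤ ah := by
  refine Multiset.sort_getD_le_of_lt_card_filter _ ?_
  have hsub : Multiset.replicate F 0 + Multiset.replicate (K - k) al + Multiset.replicate k ah ≤
      (Multiset.replicate F (0 : ℝ) + Multiset.replicate (K - k) al + Multiset.replicate k ah +
        Multiset.replicate U 1).filter (· ≤ ah) := by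
    refine Multiset.le_filter.mpr ⟨Multiset.le_add_right _ _, fun y hy => ?_⟩
    simp only [Multiset.mem_add, Multiset.mem_replicate] at hy
    rcases hy with (⟨-, rfl⟩ | ⟨-, rfl⟩) | ⟨-, rfl⟩
    exacts [hah, hal, le_rfl]
  have := Multiset.card_le_card hsub
  simp only [Multiset.card_add, Multiset.card_replicate] at this
  omega

theorem cast_le_of_frac_le_medOf {F U K T k : ℕ} {x y : ℝ} (hy : 0 ≤ y) (hxy : x ≤ y)
    (hk : k ≤ K) (hT : 0 < T) (hFK : T < 2 * (F + K))
    (h : ((F : ℝ) + k) / T ≤ medOf F U K T ((F + K * x) / T) ((F + K * y) / T) k) :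
    (k : ℝ) ≤ K * y := by
  have hT' : (0 : ℝ) < T := by exact_mod_cast hT
  have hmed := medOf_le F U K T ((F + K * x) / T) ((F + K * y) / T) k (by positivity)
    (by gcongr) hk hFK
  linarith [(div_le_div_iff_of_pos_right hT').mp (h.trans hmed)]

theorem Tpost_comm (PL PH a b x y : ℝ) : Tpost PL PH a b x y = Tpost PH PL b a y x := by
  simp only [Tpost, add_comm]

theorem Tpost_mem_Icc {PL PH a b x y : ℝ} (ha : 0 ≤ PL * a) (hb : 0 ≤ PH * b)
    (hD : 0 < PL * a + PH * b) (hxy : y ≤ x) : Tpost PL PH a b x y ∈ Set.Icc y x := by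
  unfold Tpost
  constructor
  · rw [le_div_iff₀ hD]; nlinarith [mul_nonneg ha (sub_nonneg.mpr hxy)]
  · rw [div_le_iff₀ hD]; nlinarith [mul_nonneg hb (sub_nonneg.mpr hxy)]

theorem Tpost_le_Tpost {PL PH a b a' b' x y : ℝ} (hPL : 0 ≤ PL) (hPH : 0 ≤ PH)
    (hD : 0 < PL * a + PH * b) (hD' : 0 < PL * a' + PH * b')
    (h : 0 ≤ (a' * b - a * b') * (x - y)) : Tpost PL PH a b x y ≤ Tpost PL PH a' b' x y := by
  unfold Tpost
  rw [div_le_div_iff₀ hD hD']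
  linear_combination mul_nonneg (mul_nonneg hPL hPH) h

theorem Tpost_low_chain {PL PH PlL PhL PlH PhH : ℝ} (hPL : 0 < PL) (hPH : 0 < PH)
    (hPhL : 0 ≤ PhL) (hPlH : 0 ≤ PlH) (hsumL : PlL + PhL = 1) (hsumH : PlH + PhH = 1)
    (hcorr : PlH < PlL) :
    PlH ≤ Tpost PL PH PhL PhH PlL PlH ∧
      Tpost PL PH PhL PhH PlL PlH ≤ Tpost PL PH PlL PlH PlL PlH ∧
      Tpost PL PH PlL PlH PlL PlH ≤ PlL := by
  have hPlL : 0 < PlL := hPlH.trans_lt hcorr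
  have hPhH : 0 < PhH := by linarith
  have hDl : 0 < PL * PlL + PH * PlH := by positivity
  have hDh : 0 < PL * PhL + PH * PhH := by positivity
  have hdet : PlL * PhH - PhL * PlH = PlL - PlH := by linear_combination PlL * hsumH - PlH * hsumL
  refine ⟨(Tpost_mem_Icc (by positivity) (by positivity) hDh hcorr.le).1,
    Tpost_le_Tpost hPL.le hPH.le hDh hDl (by rw [hdet]; exact mul_self_nonneg _),
    (Tpost_mem_Icc (by positivity) (by positivity) hDl hcorr.le).2⟩

theorem Tpost_high_chain {PL PH PlL PhL PlH PhH : ℝ} (hPL : 0 < PL) (hPH : 0 < PH)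
    (hPhL : 0 ≤ PhL) (hPlH : 0 ≤ PlH) (hsumL : PlL + PhL = 1) (hsumH : PlH + PhH = 1)
    (hcorr : PlH < PlL) :
    PhL ≤ Tpost PL PH PlL PlH PhL PhH ∧
      Tpost PL PH PlL PlH PhL PhH ≤ Tpost PL PH PhL PhH PhL PhH ∧
      Tpost PL PH PhL PhH PhL PhH ≤ PhH := by
  -- exchange the two worlds and the two signals
  simpa only [Tpost_comm PH PL] using
    Tpost_low_chain hPH hPL hPlH hPhL (by linarith) (by linarith) (by linarith)

theorem cconst_nonneg {PL PH PlL PhL PlH PhH : ℝ} (hPL : 0 < PL) (hPH : 0 < PH)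
    (hPhL : 0 ≤ PhL) (hPlH : 0 ≤ PlH) (hsumL : PlL + PhL = 1) (hsumH : PlH + PhH = 1)
    (hcorr : PlH < PlL) : 0 ≤ cconst PL PH PlL PhL PlH PhH := by
  obtain ⟨hl₁, hl₂, hl₃⟩ := Tpost_low_chain hPL hPH hPhL hPlH hsumL hsumH hcorr
  obtain ⟨hh₁, hh₂, hh₃⟩ := Tpost_high_chain hPL hPH hPhL hPlH hsumL hsumH hcorr
  unfold cconst
  refine mul_nonneg (by norm_num) (le_min (le_min (le_min ?_ ?_) (le_min ?_ ?_)) (le_min ?_ ?_)) <;>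
    linarith

theorem three_mul_cconst_le (PL PH PlL PhL PlH PhH : ℝ) :
    3 * cconst PL PH PlL PhL PlH PhH ≤ PhH - Tpost PL PH PhL PhH PhL PhH := by
  unfold cconst
  rw [← mul_assoc, mul_one_div_cancel three_ne_zero, one_mul]
  exact min_le_of_left_le (min_le_of_right_le (min_le_right _ _))

theorem Real.exp_neg_le_one_sub_add_sq {x : ℝ} (hx : 0 ≤ x) : Real.exp (-x) ≤ 1 - x + x ^ 2 := by
  rw [Real.exp_neg, inv_le_iff_one_le_mul₀ (Real.exp_pos x)]
  -- `(1 - x + x²)(1 + x) = 1 + x³`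
  nlinarith [Real.add_one_le_exp x, pow_nonneg hx 3, sq_nonneg (x - 1 / 2)]

theorem one_sub_add_mul_exp_neg_le {p t : ℝ} (hp0 : 0 ≤ p) (hp1 : p ≤ 1) (ht : 0 ≤ t) :
    1 - p + p * Real.exp (-t) ≤ Real.exp (-(p * t) + t ^ 2) := by
  nlinarith [Real.add_one_le_exp (-(p * t) + t ^ 2), sq_nonneg t,
    mul_le_mul_of_nonneg_left (Real.exp_neg_le_one_sub_add_sq ht) hp0]

theorem sum_binomial_lower_tail_le_exp_mul {p a t : ℝ} (hp0 : 0 ≤ p) (hp1 : p ≤ 1) (ht : 0 ≤ t)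
    (K : ℕ) :
    ∑ k ∈ Finset.range (K + 1),
        (if (k : ℝ) ≤ a then p ^ k * (1 - p) ^ (K - k) * K.choose k else 0)
      ≤ Real.exp (t * a) * (p * Real.exp (-t) + (1 - p)) ^ K := by
  rw [add_pow, Finset.mul_sum]
  refine Finset.sum_le_sum fun k _ => ?_
  have hq : 0 ≤ 1 - p := by linarith
  have hw : 0 ≤ p ^ k * (1 - p) ^ (K - k) * K.choose k := by positivity
  split_ifs with hk
  · calc p ^ k * (1 - p) ^ (K - k) * K.choose k
        ≤ p ^ k * (1 - p) ^ (K - k) * K.choose k * Real.exp (t * (a - k)) :=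
          le_mul_of_one_le_right hw (Real.one_le_exp (by nlinarith))
      _ = _ := by
          rw [mul_sub, Real.exp_sub, mul_pow, ← Real.exp_nat_mul, mul_neg, Real.exp_neg,
            mul_comm (k : ℝ) t]
          field_simp
  · positivity

theorem PMF.binomial_toNNReal_apply {p : ℝ} (hp0 : 0 ≤ p) (hp1 : p ≤ 1) (K : ℕ)
    (k : Fin (K + 1)) :
    PMF.binomial p.toNNReal (Real.toNNReal_le_one.mpr hp1) K k
      = ENNReal.ofReal (p ^ (k : ℕ) * (1 - p) ^ (K - k) * K.choose k) := by
  have hq : 0 ≤ 1 - p := by linarith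
  rw [PMF.binomial_apply, Fin.val_last, ENNReal.ofReal_mul (by positivity),
    ENNReal.ofReal_mul (by positivity), ENNReal.ofReal_pow hp0, ENNReal.ofReal_pow hq,
    ENNReal.ofReal_natCast, ENNReal.ofReal_sub _ hp0, ENNReal.ofReal_one]
  rfl

theorem PMF.binomial_lower_tail_le {p t : ℝ} (hp0 : 0 ≤ p) (hp1 : p ≤ 1) (ht : 0 ≤ t) (K : ℕ) :
    ∑ k : Fin (K + 1),
        (if (k : ℝ) ≤ K * (p - t)
          then PMF.binomial p.toNNReal (Real.toNNReal_le_one.mpr hp1) K k else 0)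
      ≤ ENNReal.ofReal (Real.exp (-(K * t ^ 2 / 4))) := by
  have hq : 0 ≤ 1 - p := by linarith
  calc ∑ k : Fin (K + 1),
        (if (k : ℝ) ≤ K * (p - t)
          then PMF.binomial p.toNNReal (Real.toNNReal_le_one.mpr hp1) K k else 0)
      = ENNReal.ofReal (∑ k ∈ Finset.range (K + 1),
          if (k : ℝ) ≤ K * (p - t) then p ^ k * (1 - p) ^ (K - k) * K.choose k else 0) := by
        rw [ENNReal.ofReal_sum_of_nonneg fun k _ => by positivity, ← Fin.sum_univ_eq_sum_range]
        refine Finset.sum_congr rfl fun k _ => ?_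
        split_ifs
        · exact PMF.binomial_toNNReal_apply hp0 hp1 K k
        · exact ENNReal.ofReal_zero.symm
    _ ≤ ENNReal.ofReal
          (Real.exp (t / 2 * (K * (p - t))) * (p * Real.exp (-(t / 2)) + (1 - p)) ^ K) :=
        ENNReal.ofReal_le_ofReal (sum_binomial_lower_tail_le_exp_mul hp0 hp1 (by positivity) K)
    _ ≤ ENNReal.ofReal
          (Real.exp (t / 2 * (K * (p - t))) * Real.exp (-(p * (t / 2)) + (t / 2) ^ 2) ^ K) := by
        gcongr
        linarith [one_sub_add_mul_exp_neg_le hp0 hp1 (by positivity : 0 ≤ t / 2)]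
    _ = ENNReal.ofReal (Real.exp (-(K * t ^ 2 / 4))) := by
        rw [← Real.exp_nat_mul, ← Real.exp_add]
        ring_nf

theorem mechanism_correct_world_H_general
    (PL PH PlL PhL PlH PhH : ℝ)
    (hPL : 0 < PL) (hPH : 0 < PH)
    (hPhL0 : 0 ≤ PhL)
    (hPlH0 : 0 ≤ PlH) (hPhH0 : 0 ≤ PhH) (hPhH1 : PhH ≤ 1)
    (hsumL : PlL + PhL = 1) (hsumH : PlH + PhH = 1)
    (hcorr : PlH < PlL)
    (T F U K : ℕ) (hTpos : 0 < T)
    (hFUK : F + U + K = T) (hU : 2 * U < T) :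
    (∑ k : Fin (K + 1),
        if ((F : ℝ) + (k : ℕ)) / T
            ≤ medOf F U K T (((F : ℝ) + K * Tpost PL PH PlL PlH PhL PhH) / T)
              (((F : ℝ) + K * Tpost PL PH PhL PhH PhL PhH) / T) k
          then PMF.binomial (Real.toNNReal PhH) (Real.toNNReal_le_one.mpr hPhH1) K k
          else 0)
      ≤ ENNReal.ofReal (2 * Real.exp (-2 * (cconst PL PH PlL PhL PlH PhH) ^ 2 * K)) := by
  set c := cconst PL PH PlL PhL PlH PhH
  set al := ((F : ℝ) + K * Tpost PL PH PlL PlH PhL PhH) / T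
  set ah := ((F : ℝ) + K * Tpost PL PH PhL PhH PhL PhH) / T
  have hc : 0 ≤ c := cconst_nonneg hPL hPH hPhL0 hPlH0 hsumL hsumH hcorr
  obtain ⟨hhl, hhl_hh, -⟩ := Tpost_high_chain hPL hPH hPhL0 hPlH0 hsumL hsumH hcorr
  have hwrong (k : Fin (K + 1)) (h : ((F : ℝ) + (k : ℕ)) / T ≤ medOf F U K T al ah k) :
      ((k : ℕ) : ℝ) ≤ K * (PhH - 3 * c) :=
    (cast_le_of_frac_le_medOf (by linarith) hhl_hh (Nat.lt_succ_iff.mp k.isLt) hTpos (by omega)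
      h).trans (by gcongr; linarith [three_mul_cconst_le PL PH PlL PhL PlH PhH])
  calc _ ≤ ∑ k : Fin (K + 1),
        (if ((k : ℕ) : ℝ) ≤ K * (PhH - 3 * c)
          then PMF.binomial PhH.toNNReal (Real.toNNReal_le_one.mpr hPhH1) K k else 0) :=
        Finset.sum_le_sum fun k _ => by
          split_ifs with h h'
          exacts [le_rfl, absurd (hwrong k h) h', zero_le, le_rfl]
    _ ≤ ENNReal.ofReal (Real.exp (-(K * (3 * c) ^ 2 / 4))) :=
        PMF.binomial_lower_tail_le hPhH0 hPhH1 (by positivity) K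
    _ ≤ _ := by
        refine ENNReal.ofReal_le_ofReal ((Real.exp_le_exp.mpr ?_).trans
          (le_mul_of_one_le_left (Real.exp_pos _).le one_le_two))
        nlinarith [mul_nonneg (sq_nonneg c) (Nat.cast_nonneg (α := ℝ) K)]

/-- Correctness of the Wisdom-of-the-Crowd-Voting mechanism in world `H`: under truthful play,
the probability (over the binomially distributed number `k` of contingent agents receiving
signal `h`) that the fraction of reported `h` signals does not exceed the median of the
predictions (i.e. that `R` is wrongly announced) is at most `2·exp(−2c²K)`. -/
theorem mechanism_correct_world_H
    (PL PH PlL PhL PlH PhH : ℝ)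
    (hPL : 0 < PL) (hPH : 0 < PH) (hP : PL + PH = 1)
    (hPlL0 : 0 ≤ PlL) (hPlL1 : PlL ≤ 1) (hPhL0 : 0 ≤ PhL) (hPhL1 : PhL ≤ 1)
    (hPlH0 : 0 ≤ PlH) (hPlH1 : PlH ≤ 1) (hPhH0 : 0 ≤ PhH) (hPhH1 : PhH ≤ 1)
    (hsumL : PlL + PhL = 1) (hsumH : PlH + PhH = 1)
    (hcorr : PlH < PlL)
    (hpos : 0 < PlH) (hlt : PlL < 1)
    (T F U K : ℕ) (hT : Odd T) (hTpos : 0 < T)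
    (hFUK : F + U + K = T) (hF : 2 * F < T) (hU : 2 * U < T) :
    (∑ k : Fin (K + 1),
        if ((F : ℝ) + (k : ℕ)) / T
            ≤ medOf F U K T (((F : ℝ) + K * Tpost PL PH PlL PlH PhL PhH) / T)
              (((F : ℝ) + K * Tpost PL PH PhL PhH PhL PhH) / T) k
          then PMF.binomial (Real.toNNReal PhH) (Real.toNNReal_le_one.mpr hPhH1) K k
          else 0)
      ≤ ENNReal.ofReal (2 * Real.exp (-2 * (cconst PL PH PlL PhL PlH PhH) ^ 2 * K)) :=
  mechanism_correct_world_H_general PL PH PlL PhL PlH PhH hPL hPH hPhL0 hPlH0 hPhH0 hPhH1 hsumL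
    hsumH hcorr T F U K hTpos hFUK hU
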